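/- For every integer k ≥ 1 and every q ∈ ℂ with |q| ≤ 1/20, there exists a unique w ∈ ℂ with |w − 1| ≤ 1/2 satisfying the fixed-point equation w = 1 + q·F_k(w;q). -/

import Mathlib

/-- `α_i(k) = ∏_{l=1}^{i} (1 - l/k)`. -/
noncomputable def alphaCoef (i k : ℕ) : ℝ :=
  ∏ l ∈ Finset.Icc 1 i, (1 - (l : ℝ) / (k : ℝ))

/-- `α_i(-k)⁻¹ = k^i · k! / (k+i)!`. -/
noncomputable def alphaNegInv (i k : ℕ) : ℝ :=
  (k : ℝ) ^ i * (k.factorial : ℝ) / ((k + i).factorial : ℝ)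

/-- The `i`-th term of the series defining `F_k(w;q)`. -/
noncomputable def Fterm (k : ℕ) (w q : ℂ) (i : ℕ) : ℂ :=
  (-1 : ℂ) ^ i * ((alphaCoef i k : ℂ) * w ^ (-(i : ℤ)) - (alphaNegInv i k : ℂ) * w ^ (i + 1)) *
    q ^ (i * (i + 1) / 2 - 1)

/-- `F_k(w;q) = ∑_{i≥1} (-1)^i [α_i(k) w^{-i} - α_i(-k)⁻¹ w^{i+1}] q^{i(i+1)/2 - 1}`. -/
noncomputable def FK (k : ℕ) (w q : ℂ) : ℂ :=
  ∑' i : ℕ, Fterm k w q (i + 1)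

/-!
On the disc `‖w - 1‖ ≤ 1/2` both `‖w‖` and `‖w⁻¹‖` are at most `2`, the coefficients satisfy
`|α_i(k)| ≤ 1` and `0 ≤ α_i(-k)⁻¹ ≤ 1`, and the exponent `i(i+1)/2 - 1` is at least `i - 1`.
Hence for `‖q‖ ≤ 1/20` the `i`-th term of `F_k` and its Lipschitz constant in `w` are dominated by
geometric series of ratio `1/5`, giving `‖F_k‖ ≤ 10` and `Lip(F_k) ≤ 10` on the disc. So
`w ↦ 1 + q F_k(w;q)` maps the disc into itself with Lipschitz constant `1/2`, and the Banach fixed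
point theorem gives existence and uniqueness.
-/

open Metric Set Function

lemma norm_alphaCoef_le_one (i k : ℕ) : ‖(alphaCoef i k : ℂ)‖ ≤ 1 := by
  rw [Complex.norm_real, Real.norm_eq_abs, alphaCoef, Finset.abs_prod]
  -- For `k = 0` every factor is `1` because `l / 0 = 0`; for `k ≤ i` the factor `l = k` vanishes.
  rcases Nat.eq_zero_or_pos k with rfl | hk
  · simp
  rcases le_or_gt k i with hki | hik
  · rw [Finset.prod_eq_zero (i := k) (Finset.mem_Icc.2 ⟨hk, hki⟩) (by field_simp; simp)]
    exact zero_le_one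
  refine Finset.prod_le_one (fun _ _ => abs_nonneg _) fun l hl => ?_
  have hlk : (l : ℝ) / k ≤ 1 :=
    (div_le_one (by positivity)).2 (by exact_mod_cast (Finset.mem_Icc.1 hl).2.trans hik.le)
  rw [abs_le]
  constructor <;> linarith [show 0 ≤ (l : ℝ) / k by positivity]

lemma norm_alphaNegInv_le_one (i k : ℕ) : ‖(alphaNegInv i k : ℂ)‖ ≤ 1 := by
  rw [Complex.norm_real, Real.norm_of_nonneg (by unfold alphaNegInv; positivity), alphaNegInv,
    div_le_one (by positivity)]
  have : k ^ i * k.factorial ≤ (k + i).factorial :=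
    calc k ^ i * k.factorial ≤ k.factorial * (k + 1) ^ i := by
          rw [mul_comm]; gcongr; exact k.le_succ
      _ ≤ (k + i).factorial := Nat.factorial_mul_pow_le_factorial
  exact_mod_cast this

lemma norm_pow_sub_pow_le {R : Type*} [NormedCommRing R] [NormOneClass R] {x y : R} {M : ℝ}
    (hx : ‖x‖ ≤ M) (hy : ‖y‖ ≤ M) (n : ℕ) :
    ‖x ^ n - y ^ n‖ ≤ n * M ^ (n - 1) * ‖x - y‖ := by
  rw [← geom_sum₂_mul]
  refine (norm_mul_le _ _).trans ?_
  gcongr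
  calc ‖∑ i ∈ Finset.range n, x ^ i * y ^ (n - 1 - i)‖
      ≤ ∑ i ∈ Finset.range n, ‖x‖ ^ i * ‖y‖ ^ (n - 1 - i) :=
        (norm_sum_le _ _).trans <| Finset.sum_le_sum fun i _ =>
          (norm_mul_le _ _).trans (mul_le_mul (norm_pow_le _ _) (norm_pow_le _ _)
            (norm_nonneg _) (by positivity))
    _ ≤ ∑ i ∈ Finset.range n, M ^ (n - 1) := by
        refine Finset.sum_le_sum fun i hi => ?_
        have hM : 0 ≤ M := (norm_nonneg x).trans hx
        calc ‖x‖ ^ i * ‖y‖ ^ (n - 1 - i) ≤ M ^ i * M ^ (n - 1 - i) := by gcongr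
          _ = M ^ (n - 1) := by rw [← pow_add]; congr 1; have := Finset.mem_range.1 hi; omega
    _ = n * M ^ (n - 1) := by simp

theorem exists_unique_isFixedPt_of_lipschitzOnWith {α : Type*} [MetricSpace α] {s : Set α}
    (hsc : IsComplete s) (hs : s.Nonempty) {f : α → α} {K : NNReal} (hK : K < 1)
    (hsf : MapsTo f s s) (hf : LipschitzOnWith K f s) : ∃! x, x ∈ s ∧ IsFixedPt f x := by
  obtain ⟨x₀, hx₀⟩ := hs
  obtain ⟨x, hxs, hx, -⟩ := ContractingWith.exists_fixedPoint' hsc hsf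
    ⟨hK, hf.mapsToRestrict hsf⟩ hx₀ (edist_ne_top _ _)
  refine ⟨x, ⟨hxs, hx⟩, fun y ⟨hys, hy⟩ => ?_⟩
  have hle := hf.dist_le_mul y hys x hxs
  rw [hy.eq, hx.eq] at hle
  have hK' : (K : ℝ) < 1 := hK
  exact dist_le_zero.1 (by nlinarith [dist_nonneg (x := y) (y := x)])

lemma le_triangle_sub_one (i : ℕ) : i ≤ (i + 1) * (i + 1 + 1) / 2 - 1 := by
  have : i + 1 ≤ (i + 1) * (i + 1 + 1) / 2 :=
    (Nat.le_div_iff_mul_le two_pos).2 (by nlinarith)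
  omega

lemma Fterm_eq (k n : ℕ) (w q : ℂ) :
    Fterm k w q n = (-1) ^ n * ((alphaCoef n k : ℂ) * w⁻¹ ^ n - (alphaNegInv n k : ℂ) * w ^ (n + 1))
      * q ^ (n * (n + 1) / 2 - 1) := by
  rw [Fterm, zpow_neg, zpow_natCast, inv_pow]

section ClosedBall

variable {w w' : ℂ}

lemma norm_le_two_of_mem_closedBall (hw : w ∈ closedBall (1 : ℂ) (1 / 2)) : ‖w‖ ≤ 2 := by
  rw [mem_closedBall, dist_eq_norm] at hw
  linarith [norm_le_norm_add_norm_sub' w 1, norm_one (α := ℂ)]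

lemma half_le_norm_of_mem_closedBall (hw : w ∈ closedBall (1 : ℂ) (1 / 2)) : 1 / 2 ≤ ‖w‖ := by
  rw [mem_closedBall, dist_eq_norm] at hw
  linarith [norm_sub_norm_le 1 w, norm_sub_rev w 1, norm_one (α := ℂ)]

lemma norm_inv_le_two_of_mem_closedBall (hw : w ∈ closedBall (1 : ℂ) (1 / 2)) : ‖w⁻¹‖ ≤ 2 := by
  rw [norm_inv]
  simpa using inv_anti₀ one_half_pos (half_le_norm_of_mem_closedBall hw)

lemma norm_inv_sub_inv_le_of_mem_closedBall (hw : w ∈ closedBall (1 : ℂ) (1 / 2))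
    (hw' : w' ∈ closedBall (1 : ℂ) (1 / 2)) : ‖w⁻¹ - w'⁻¹‖ ≤ 4 * ‖w - w'‖ := by
  have h := half_le_norm_of_mem_closedBall hw
  have h' := half_le_norm_of_mem_closedBall hw'
  have hw0 : w ≠ 0 := norm_pos_iff.1 (by linarith)
  have hw0' : w' ≠ 0 := norm_pos_iff.1 (by linarith)
  rw [inv_sub_inv hw0 hw0', norm_div, norm_mul, norm_sub_rev, div_le_iff₀ (by positivity)]
  have : 1 ≤ 4 * (‖w‖ * ‖w'‖) := by nlinarith [mul_le_mul h h' one_half_pos.le (by linarith)]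
  nlinarith [norm_nonneg (w - w')]

end ClosedBall

lemma norm_pow_triangle_sub_one_le {q : ℂ} {r : ℝ} (hq : ‖q‖ ≤ r) (hr : r ≤ 1) (i : ℕ) :
    ‖q ^ ((i + 1) * (i + 1 + 1) / 2 - 1)‖ ≤ r ^ i := by
  rw [norm_pow]
  calc ‖q‖ ^ ((i + 1) * (i + 1 + 1) / 2 - 1) ≤ r ^ ((i + 1) * (i + 1 + 1) / 2 - 1) := by gcongr
    _ ≤ r ^ i := pow_le_pow_of_le_one ((norm_nonneg q).trans hq) hr (le_triangle_sub_one i)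

section TermBounds

variable (k i : ℕ) {w w' q : ℂ} (hw : w ∈ closedBall (1 : ℂ) (1 / 2)) (hq : ‖q‖ ≤ 1 / 20)
include hw hq

lemma norm_Fterm_succ_le : ‖Fterm k w q (i + 1)‖ ≤ 6 * (1 / 5) ^ i := by
  set A : ℂ := (alphaCoef (i + 1) k : ℂ)
  set B : ℂ := (alphaNegInv (i + 1) k : ℂ)
  calc ‖Fterm k w q (i + 1)‖
      = ‖A * w⁻¹ ^ (i + 1) - B * w ^ (i + 1 + 1)‖ * ‖q ^ ((i + 1) * (i + 1 + 1) / 2 - 1)‖ := by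
        rw [Fterm_eq, norm_mul, norm_mul, norm_pow, norm_neg, norm_one, one_pow, one_mul]
    _ ≤ (‖A‖ * ‖w⁻¹‖ ^ (i + 1) + ‖B‖ * ‖w‖ ^ (i + 1 + 1)) * (1 / 20) ^ i := by
        gcongr
        · exact (norm_sub_le _ _).trans_eq (by rw [norm_mul, norm_mul, norm_pow, norm_pow])
        · exact norm_pow_triangle_sub_one_le hq (by norm_num) i
    _ ≤ (1 * 2 ^ (i + 1) + 1 * 2 ^ (i + 1 + 1)) * (1 / 20) ^ i := by
        gcongr
        · exact norm_alphaCoef_le_one _ _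
        · exact norm_inv_le_two_of_mem_closedBall hw
        · exact norm_alphaNegInv_le_one _ _
        · exact norm_le_two_of_mem_closedBall hw
    _ = 6 * (1 / 10) ^ i := by
        rw [show (1 / 10 : ℝ) = 2 * (1 / 20) by norm_num, mul_pow]; ring
    _ ≤ 6 * (1 / 5) ^ i := by gcongr; norm_num

lemma norm_Fterm_succ_sub_le (hw' : w' ∈ closedBall (1 : ℂ) (1 / 2)) :
    ‖Fterm k w q (i + 1) - Fterm k w' q (i + 1)‖ ≤ 8 * (1 / 5) ^ i * ‖w - w'‖ := by
  set A : ℂ := (alphaCoef (i + 1) k : ℂ)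
  set B : ℂ := (alphaNegInv (i + 1) k : ℂ)
  have hdiff : Fterm k w q (i + 1) - Fterm k w' q (i + 1) = (-1) ^ (i + 1) *
      (A * (w⁻¹ ^ (i + 1) - w'⁻¹ ^ (i + 1)) - B * (w ^ (i + 1 + 1) - w' ^ (i + 1 + 1))) *
      q ^ ((i + 1) * (i + 1 + 1) / 2 - 1) := by
    rw [Fterm_eq, Fterm_eq]; ring
  have hinv := norm_pow_sub_pow_le (norm_inv_le_two_of_mem_closedBall hw)
    (norm_inv_le_two_of_mem_closedBall hw') (i + 1)
  have hpow := norm_pow_sub_pow_le (norm_le_two_of_mem_closedBall hw)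
    (norm_le_two_of_mem_closedBall hw') (i + 1 + 1)
  simp only [Nat.cast_add, Nat.cast_one, add_tsub_cancel_right] at hinv hpow
  have hcoef : 6 * (i : ℝ) + 8 ≤ 8 * 2 ^ i := by
    have : (i : ℝ) + 1 ≤ 2 ^ i := by exact_mod_cast Nat.lt_two_pow_self
    linarith
  calc ‖Fterm k w q (i + 1) - Fterm k w' q (i + 1)‖
      = ‖A * (w⁻¹ ^ (i + 1) - w'⁻¹ ^ (i + 1)) - B * (w ^ (i + 1 + 1) - w' ^ (i + 1 + 1))‖ *
          ‖q ^ ((i + 1) * (i + 1 + 1) / 2 - 1)‖ := by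
        rw [hdiff, norm_mul, norm_mul, norm_pow, norm_neg, norm_one, one_pow, one_mul]
    _ ≤ (‖A‖ * ((i + 1) * 2 ^ i * ‖w⁻¹ - w'⁻¹‖) +
          ‖B‖ * ((i + 1 + 1) * 2 ^ (i + 1) * ‖w - w'‖)) * (1 / 20) ^ i := by
        gcongr
        · exact (norm_sub_le _ _).trans (by rw [norm_mul, norm_mul]; gcongr)
        · exact norm_pow_triangle_sub_one_le hq (by norm_num) i
    _ ≤ (1 * ((i + 1) * 2 ^ i * (4 * ‖w - w'‖)) +
          1 * ((i + 1 + 1) * 2 ^ (i + 1) * ‖w - w'‖)) * (1 / 20) ^ i := by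
        gcongr
        · exact norm_alphaCoef_le_one _ _
        · exact norm_inv_sub_inv_le_of_mem_closedBall hw hw'
        · exact norm_alphaNegInv_le_one _ _
    _ = (6 * i + 8) * (1 / 10) ^ i * ‖w - w'‖ := by
        rw [show (1 / 10 : ℝ) = 2 * (1 / 20) by norm_num, mul_pow]; ring
    _ ≤ 8 * 2 ^ i * (1 / 10) ^ i * ‖w - w'‖ := by gcongr
    _ = 8 * (1 / 5) ^ i * ‖w - w'‖ := by
        rw [show (1 / 5 : ℝ) = 2 * (1 / 10) by norm_num, mul_pow]; ring

end TermBounds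

section SeriesBounds

variable (k : ℕ) {w w' q : ℂ} (hw : w ∈ closedBall (1 : ℂ) (1 / 2)) (hq : ‖q‖ ≤ 1 / 20)
include hw hq

lemma summable_Fterm_succ : Summable fun i => Fterm k w q (i + 1) :=
  .of_norm_bounded ((summable_geometric_of_lt_one (by norm_num) (by norm_num)).mul_left 6)
    (norm_Fterm_succ_le k · hw hq)

lemma norm_FK_le : ‖FK k w q‖ ≤ 10 :=
  (tsum_of_norm_bounded ((hasSum_geometric_of_lt_one (by norm_num) (by norm_num)).mul_left 6)
    (norm_Fterm_succ_le k · hw hq)).trans (by norm_num)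

lemma norm_FK_sub_FK_le (hw' : w' ∈ closedBall (1 : ℂ) (1 / 2)) :
    ‖FK k w q - FK k w' q‖ ≤ 10 * ‖w - w'‖ := by
  rw [FK, FK, ← (summable_Fterm_succ k hw hq).tsum_sub (summable_Fterm_succ k hw' hq)]
  refine (tsum_of_norm_bounded (((hasSum_geometric_of_lt_one (by norm_num) (by norm_num)).mul_left
    8).mul_right ‖w - w'‖) (norm_Fterm_succ_sub_le k · hw hq hw')).trans_eq ?_
  norm_num

end SeriesBounds

theorem stmt12_general (k : ℕ) (q : ℂ) (hq : ‖q‖ ≤ 1 / 20) :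
    ∃! w : ℂ, ‖w - 1‖ ≤ 1 / 2 ∧ w = 1 + q * FK k w q := by
  set f : ℂ → ℂ := fun w => 1 + q * FK k w q
  have hmaps : MapsTo f (closedBall 1 (1 / 2)) (closedBall 1 (1 / 2)) := fun w hw => by
    rw [mem_closedBall, dist_eq_norm, add_sub_cancel_left, norm_mul]
    calc ‖q‖ * ‖FK k w q‖ ≤ 1 / 20 * 10 := by gcongr; exact norm_FK_le k hw hq
      _ = 1 / 2 := by norm_num
  have hlip : LipschitzOnWith (1 / 2) f (closedBall 1 (1 / 2)) :=
    lipschitzOnWith_iff_norm_sub_le.2 fun w hw w' hw' =>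
      calc ‖f w - f w'‖ = ‖q‖ * ‖FK k w q - FK k w' q‖ := by
            rw [← norm_mul, mul_sub, add_sub_add_left_eq_sub]
        _ ≤ 1 / 20 * (10 * ‖w - w'‖) := by gcongr; exact norm_FK_sub_FK_le k hw hq hw'
        _ = ((1 / 2 : NNReal) : ℝ) * ‖w - w'‖ := by push_cast; ring
  refine (existsUnique_congr fun w => ?_).1 <| exists_unique_isFixedPt_of_lipschitzOnWith
    isClosed_closedBall.isComplete (nonempty_closedBall.2 (by norm_num)) (by norm_num) hmaps hlip
  rw [mem_closedBall, dist_eq_norm, IsFixedPt, eq_comm]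

theorem stmt12 (k : ℕ) (hk : 1 ≤ k) (q : ℂ) (hq : ‖q‖ ≤ 1 / 20) :
    ∃! w : ℂ, ‖w - 1‖ ≤ 1 / 2 ∧ w = 1 + q * FK k w q :=
  stmt12_general k q hq
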